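/- arXiv:2402.09462 — 2 statements merged into one kernel-verified Lean document; each statement's English description precedes it below -/
import Mathlib

section
/- Let σ₁ > 0 and σ₂ > 0. Let μ₁, μ₂ be the Gaussian probability measures on ℝ with mean 0 and variances σ₁², σ₂² respectively, and consider the product measure μ₁ ⊗ μ₂ (i.e., X ~ N(0, σ₁²) and Y ~ N(0, σ₂²) are independent). Define, for r > 0, f_R(r) = (1/(2σ₁σ₂))·exp(−r(σ₁² + σ₂²)/(4σ₁²σ₂²))·I₀(r(σ₁² − σ₂²)/(4σ₁²σ₂²)), and, for 0 < x < r, f(x ∣ r) = x^{−1/2}·(r − x)^{−1/2}·exp(−(r − x)/(2σ₂²) − x/(2σ₁²)) / (π·exp(−r(σ₁² + σ₂²)/(4σ₁²σ₂²))·I₀(r(σ₁² − σ₂²)/(4σ₁²σ₂²))). Then for every bounded measurable function g : ℝ → ℝ and every Borel set A ⊆ (0, ∞), ∫ g(x²)·𝟙_A(x² + y²) d(μ₁ ⊗ μ₂)(x, y) = ∫_{r ∈ A} ( ∫_{x ∈ (0, r)} g(x)·f(x ∣ r) dx )·f_R(r) dr. (That is, f(· ∣ r) is the conditional density of X² given X²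 + Y² = r.) -/
/-!
If `X ~ N(0, v)`, the substitution `u = x²` shows that `X²` has density
`ψ_v(u) = exp(-u / 2v) / √(2π v u)` on `(0, ∞)`. So `(X², Y²)` has density `ψ₁(u) ψ₂(u')` on the
open quadrant, and the shear `(u, u') ↦ (u, u + u')` turns this into the density `ψ₁(x) ψ₂(r - x)`
of `(X², X² + Y²)` on `0 < x < r`. This joint density is `f(x ∣ r) f_R(r)`: the exponential and
Bessel factors of `f_R` cancel against the denominator of `f`, so all that is needed of `I₀` is
that it does not vanish.
-/

open MeasureTheory ProbabilityTheory Real Set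
open scoped NNReal

/-- Modified Bessel function of the first kind of order 0, via its integral representation. -/
noncomputable def besselI0 (z : ℝ) : ℝ := (1 / π) * ∫ θ in (0:ℝ)..π, Real.exp (z * Real.cos θ)

lemma integral_Ioi_Ioi_eq_integral_Ioo_sub {E : Type*} [NormedAddCommGroup E] [NormedSpace ℝ E]
    (F : ℝ → ℝ → E) (hF : IntegrableOn (Function.uncurry F) (Ioi 0 ×ˢ Ioi 0)) :
    ∫ u in Ioi 0, ∫ v in Ioi 0, F u v = ∫ r, ∫ u in Ioo 0 r, F u (r - u) := by
  set H : ℝ × ℝ → E := {q | 0 < q.1 ∧ q.1 < q.2}.indicator fun q => F q.1 (q.2 - q.1)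
  have hshear := measurePreserving_prod_add (volume : Measure ℝ) volume
  have hemb : MeasurableEmbedding fun z : ℝ × ℝ => (z.1, z.1 + z.2) :=
    (MeasurableEquiv.shearAddRight ℝ).measurableEmbedding
  have hH : (fun z : ℝ × ℝ => H (z.1, z.1 + z.2)) =
      (Ioi 0 ×ˢ Ioi 0).indicator (Function.uncurry F) := by
    ext ⟨u, v⟩
    simp [H, indicator_apply]
  have hHint : Integrable H (volume.prod volume) := by
    rw [← hshear.integrable_comp_emb hemb, Function.comp_def, hH]
    exact (integrable_indicator_iff (measurableSet_Ioi.prod measurableSet_Ioi)).2 hF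
  calc ∫ u in Ioi 0, ∫ v in Ioi 0, F u v
      = ∫ z in Ioi 0 ×ˢ Ioi 0, Function.uncurry F z := (setIntegral_prod _ hF).symm
    _ = ∫ z : ℝ × ℝ, H (z.1, z.1 + z.2) := by
        rw [hH, integral_indicator (measurableSet_Ioi.prod measurableSet_Ioi)]
    _ = ∫ z, H z := hshear.integral_comp hemb H
    _ = ∫ r, ∫ u, H (u, r) := integral_prod_symm H hHint
    _ = ∫ r, ∫ u in Ioo 0 r, F u (r - u) := by
        congr with r
        rw [← integral_indicator measurableSet_Ioo]
        rfl

-- The density of `X²` for `X ~ N(0, v)`, i.e. the χ²₁ density scaled by `v`.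
noncomputable def gaussianSqPDF (v : ℝ≥0) (u : ℝ) : ℝ := exp (-u / (2 * v)) / √(2 * π * v * u)

lemma integral_gaussianReal_comp_sq {v : ℝ≥0} (hv : v ≠ 0) (h : ℝ → ℝ) :
    ∫ x, h (x ^ 2) ∂gaussianReal 0 v = ∫ u in Ioi 0, h u * gaussianSqPDF v u := by
  have hjac : ∀ x : ℝ, 0 < x → 2 * x * gaussianSqPDF v (x ^ 2) = 2 * gaussianPDFReal 0 v x := by
    intro x hx
    rw [gaussianSqPDF, gaussianPDFReal, sqrt_mul' _ (sq_nonneg x), sqrt_sq hx.le]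
    field_simp
    ring_nf
  calc ∫ x, h (x ^ 2) ∂gaussianReal 0 v = ∫ x, gaussianPDFReal 0 v |x| * h (|x| ^ 2) := by
        rw [integral_gaussianReal_eq_integral_smul hv]
        congr with x
        simp [gaussianPDFReal, sq_abs]
    _ = ∫ x in Ioi 0, 2 * gaussianPDFReal 0 v x * h (x ^ 2) := by
        rw [integral_comp_abs (f := fun x => gaussianPDFReal 0 v x * h (x ^ 2)),
          ← integral_const_mul]
        simp_rw [mul_assoc]
    _ = ∫ x in Ioi 0, (2 * x ^ ((2:ℝ) - 1)) • (h (x ^ (2:ℝ)) * gaussianSqPDF v (x ^ (2:ℝ))) := by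
        refine setIntegral_congr_fun measurableSet_Ioi fun x hx => ?_
        rw [show (2:ℝ) - 1 = 1 by norm_num, rpow_one, rpow_two, smul_eq_mul, ← hjac x hx]
        ring
    _ = ∫ u in Ioi 0, h u * gaussianSqPDF v u :=
        integral_comp_rpow_Ioi_of_pos (g := fun u => h u * gaussianSqPDF v u) two_pos

lemma integral_gaussianSqPDF {v : ℝ≥0} (hv : v ≠ 0) : ∫ u in Ioi 0, gaussianSqPDF v u = 1 := by
  simpa using (integral_gaussianReal_comp_sq hv fun _ => 1).symm

lemma integrableOn_gaussianSqPDF {v : ℝ≥0} (hv : v ≠ 0) : IntegrableOn (gaussianSqPDF v) (Ioi 0) :=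
  Integrable.of_integral_ne_zero (by simp [integral_gaussianSqPDF hv])

lemma integral_prod_gaussianReal_comp_sq {v w : ℝ≥0} (hv : v ≠ 0) (hw : w ≠ 0)
    {G : ℝ → ℝ → ℝ} (hG : Measurable (Function.uncurry G)) {C : ℝ} (hC : ∀ u u', |G u u'| ≤ C) :
    ∫ p, G (p.1 ^ 2) (p.2 ^ 2) ∂(gaussianReal 0 v).prod (gaussianReal 0 w) =
      ∫ u in Ioi 0, ∫ u' in Ioi 0, G u u' * gaussianSqPDF w u' * gaussianSqPDF v u := by
  have hGint : Integrable (fun p : ℝ × ℝ => G (p.1 ^ 2) (p.2 ^ 2))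
      ((gaussianReal 0 v).prod (gaussianReal 0 w)) :=
    .of_bound (hG.comp ((measurable_fst.pow_const 2).prodMk
      (measurable_snd.pow_const 2))).aestronglyMeasurable C (ae_of_all _ fun p => hC _ _)
  rw [integral_prod _ hGint]
  simp_rw [integral_gaussianReal_comp_sq hw, integral_gaussianReal_comp_sq hv fun u =>
    ∫ u' in Ioi 0, G u u' * gaussianSqPDF w u', ← integral_mul_const]

lemma integrableOn_Ioi_prod_Ioi_mul_gaussianSqPDF {v w : ℝ≥0} (hv : v ≠ 0) (hw : w ≠ 0)
    {G : ℝ → ℝ → ℝ} (hG : Measurable (Function.uncurry G)) {C : ℝ} (hC : ∀ u u', |G u u'| ≤ C) :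
    IntegrableOn (Function.uncurry fun u u' => G u u' * gaussianSqPDF w u' * gaussianSqPDF v u)
      (Ioi 0 ×ˢ Ioi 0) := by
  have hbdd := ((integrableOn_gaussianSqPDF hv).mul_prod (integrableOn_gaussianSqPDF hw)).bdd_mul
    hG.aestronglyMeasurable (c := C) (ae_of_all _ fun z => hC z.1 z.2)
  rw [IntegrableOn, Measure.volume_eq_prod, ← Measure.prod_restrict]
  refine hbdd.congr (ae_of_all _ fun z => ?_)
  simp only [Function.uncurry]
  ring

lemma gaussianSqPDF_mul_gaussianSqPDF {σ₁ σ₂ : ℝ} (hσ₁ : 0 ≤ σ₁) (hσ₂ : 0 ≤ σ₂) (u r : ℝ) :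
    gaussianSqPDF ⟨σ₂ ^ 2, sq_nonneg σ₂⟩ (r - u) * gaussianSqPDF ⟨σ₁ ^ 2, sq_nonneg σ₁⟩ u =
      exp (-(r - u) / (2 * σ₂ ^ 2) - u / (2 * σ₁ ^ 2)) / (2 * π * σ₁ * σ₂ * (√u * √(r - u))) := by
  have hsqrt : ∀ σ : ℝ, 0 ≤ σ → ∀ x, √(2 * π * σ ^ 2 * x) = √(2 * π) * σ * √x := fun σ hσ x => by
    rw [sqrt_mul (by positivity), sqrt_mul (by positivity), sqrt_sq hσ]
  change exp (-(r - u) / (2 * σ₂ ^ 2)) / √(2 * π * σ₂ ^ 2 * (r - u)) *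
    (exp (-u / (2 * σ₁ ^ 2)) / √(2 * π * σ₁ ^ 2 * u)) = _
  rw [hsqrt σ₁ hσ₁, hsqrt σ₂ hσ₂, div_mul_div_comm, ← exp_add, neg_div (2 * σ₁ ^ 2) u,
    ← sub_eq_add_neg]
  congr 1
  linear_combination σ₁ * σ₂ * √u * √(r - u) * mul_self_sqrt (by positivity : (0:ℝ) ≤ 2 * π)

lemma besselI0_pos (z : ℝ) : 0 < besselI0 z := by
  have hpos : 0 < ∫ θ in (0:ℝ)..π, exp (z * cos θ) :=
    intervalIntegral.intervalIntegral_pos_of_pos_on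
      ((by fun_prop : Continuous fun θ => exp (z * cos θ)).intervalIntegrable 0 π)
      (fun _ _ => exp_pos _) pi_pos
  unfold besselI0
  positivity

theorem conditional_density_hoyt_general
    (σ₁ σ₂ : ℝ) (hσ₁ : 0 < σ₁) (hσ₂ : 0 < σ₂)
    (μ₁ μ₂ : Measure ℝ)
    (hμ₁ : μ₁ = gaussianReal 0 ⟨σ₁ ^ 2, sq_nonneg σ₁⟩)
    (hμ₂ : μ₂ = gaussianReal 0 ⟨σ₂ ^ 2, sq_nonneg σ₂⟩)
    (fR : ℝ → ℝ)
    (hfR : ∀ r : ℝ, fR r =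
      (1 / (2 * σ₁ * σ₂)) * Real.exp (-(r * (σ₁ ^ 2 + σ₂ ^ 2)) / (4 * σ₁ ^ 2 * σ₂ ^ 2)) *
        besselI0 (r * (σ₁ ^ 2 - σ₂ ^ 2) / (4 * σ₁ ^ 2 * σ₂ ^ 2)))
    (f : ℝ → ℝ → ℝ)
    (hf : ∀ x r : ℝ, f x r =
      Real.exp (-(r - x) / (2 * σ₂ ^ 2) - x / (2 * σ₁ ^ 2)) /
        (Real.sqrt x * Real.sqrt (r - x) *
          (π * Real.exp (-(r * (σ₁ ^ 2 + σ₂ ^ 2)) / (4 * σ₁ ^ 2 * σ₂ ^ 2)) *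
            besselI0 (r * (σ₁ ^ 2 - σ₂ ^ 2) / (4 * σ₁ ^ 2 * σ₂ ^ 2)))))
    (g : ℝ → ℝ) (hg : Measurable g) (hgbdd : ∃ C : ℝ, ∀ x, |g x| ≤ C)
    (A : Set ℝ) (hA : MeasurableSet A) :
    ∫ p : ℝ × ℝ, g (p.1 ^ 2) * Set.indicator A (fun _ => (1:ℝ)) (p.1 ^ 2 + p.2 ^ 2)
        ∂(μ₁.prod μ₂) =
      ∫ r in A, (∫ x in Set.Ioo 0 r, g x * f x r) * fR r := by
  obtain ⟨C, hC⟩ := hgbdd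
  subst hμ₁ hμ₂
  have hv : ∀ σ : ℝ, 0 < σ → (⟨σ ^ 2, sq_nonneg σ⟩ : ℝ≥0) ≠ 0 := fun σ hσ h =>
    (pow_pos hσ 2).ne' (congrArg NNReal.toReal h)
  set G : ℝ → ℝ → ℝ := fun u u' => g u * A.indicator (fun _ => 1) (u + u')
  have hGmeas : Measurable (Function.uncurry G) :=
    (hg.comp measurable_fst).mul
      ((measurable_const.indicator hA).comp (measurable_fst.add measurable_snd))
  have hGbdd : ∀ u u', |G u u'| ≤ C := fun u u' =>
    (abs_mul _ _).trans_le <| (mul_le_of_le_one_right (abs_nonneg _)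
      (by by_cases h : u + u' ∈ A <;> simp [h])).trans (hC u)
  rw [integral_prod_gaussianReal_comp_sq (hv σ₁ hσ₁) (hv σ₂ hσ₂) hGmeas hGbdd,
    integral_Ioi_Ioi_eq_integral_Ioo_sub _ (integrableOn_Ioi_prod_Ioi_mul_gaussianSqPDF
      (hv σ₁ hσ₁) (hv σ₂ hσ₂) hGmeas hGbdd), ← integral_indicator hA]
  congr with r
  by_cases hr : r ∈ A
  · rw [indicator_of_mem hr, ← integral_mul_const]
    congr with u
    simp only [G, add_sub_cancel, indicator_of_mem hr, mul_one]
    rw [mul_assoc, gaussianSqPDF_mul_gaussianSqPDF hσ₁.le hσ₂.le, hf, hfR]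
    field_simp [(besselI0_pos _).ne']
  · simp [indicator_of_notMem hr, G]

theorem conditional_density_hoyt
    (σ₁ σ₂ : ℝ) (hσ₁ : 0 < σ₁) (hσ₂ : 0 < σ₂)
    (μ₁ μ₂ : Measure ℝ)
    (hμ₁ : μ₁ = gaussianReal 0 ⟨σ₁ ^ 2, sq_nonneg σ₁⟩)
    (hμ₂ : μ₂ = gaussianReal 0 ⟨σ₂ ^ 2, sq_nonneg σ₂⟩)
    (fR : ℝ → ℝ)
    (hfR : ∀ r : ℝ, fR r =
      (1 / (2 * σ₁ * σ₂)) * Real.exp (-(r * (σ₁ ^ 2 + σ₂ ^ 2)) / (4 * σ₁ ^ 2 * σ₂ ^ 2)) *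
        besselI0 (r * (σ₁ ^ 2 - σ₂ ^ 2) / (4 * σ₁ ^ 2 * σ₂ ^ 2)))
    (f : ℝ → ℝ → ℝ)
    (hf : ∀ x r : ℝ, f x r =
      Real.exp (-(r - x) / (2 * σ₂ ^ 2) - x / (2 * σ₁ ^ 2)) /
        (Real.sqrt x * Real.sqrt (r - x) *
          (π * Real.exp (-(r * (σ₁ ^ 2 + σ₂ ^ 2)) / (4 * σ₁ ^ 2 * σ₂ ^ 2)) *
            besselI0 (r * (σ₁ ^ 2 - σ₂ ^ 2) / (4 * σ₁ ^ 2 * σ₂ ^ 2)))))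
    (g : ℝ → ℝ) (hg : Measurable g) (hgbdd : ∃ C : ℝ, ∀ x, |g x| ≤ C)
    (A : Set ℝ) (hA : MeasurableSet A) (hAsub : A ⊆ Set.Ioi (0:ℝ)) :
    ∫ p : ℝ × ℝ, g (p.1 ^ 2) * Set.indicator A (fun _ => (1:ℝ)) (p.1 ^ 2 + p.2 ^ 2)
        ∂(μ₁.prod μ₂) =
      ∫ r in A, (∫ x in Set.Ioo 0 r, g x * f x r) * fR r :=
  conditional_density_hoyt_general σ₁ σ₂ hσ₁ hσ₂ μ₁ μ₂ hμ₁ hμ₂ fR hfR f hf g hg hgbdd A hA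
end

section
/- Let m ∈ ℝ and σ > 0, and let μ be the Gaussian probability measure on ℝ with mean m and variance σ². Then the pushforward of μ ⊗ μ under the map (x, y) ↦ (x, x² + y²) is absolutely continuous with respect to two-dimensional Lebesgue measure, with joint density h(x, r) = (1/(2πσ²))·exp(−(r + 2m²)/(2σ²))·exp(x·m/σ²)·cosh(m·√(r − x²)/σ²)/√(r − x²) on the region {(x, r) : x² < r} and h(x, r) = 0 elsewhere. -/
open MeasureTheory ProbabilityTheory Real Set Function
open scoped ENNReal NNReal

/-!
Given `X = x`, the second coordinate is `x² + Y²`. Its density comes from the density of `Y` by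
the substitution `y = ±√(r - x²)`, with Jacobian `1 / (2√(r - x²))`. Multiplying by the density of
`X`, the two branches contribute `exp (± m √(r - x²) / σ²)`, which add up to the `cosh`.
-/

theorem lintegral_Ioi_eq_lintegral_Ioi_add_sq (c : ℝ) (H : ℝ → ℝ≥0∞) :
    ∫⁻ r in Ioi c, H r = ∫⁻ y in Ioi 0, ENNReal.ofReal (2 * y) * H (c + y ^ 2) := by
  have himage : (fun y : ℝ => c + y ^ 2) '' Ioi 0 = Ioi c := by
    ext r
    constructor
    · rintro ⟨y, hy, rfl⟩
      exact lt_add_of_pos_right c (pow_pos hy 2)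
    · intro hr
      exact ⟨√(r - c), sqrt_pos.2 (sub_pos.2 hr), by simp [sq_sqrt (sub_nonneg.2 hr.le)]⟩
  have hderiv : ∀ y ∈ Ioi (0 : ℝ), HasDerivWithinAt (fun y => c + y ^ 2) (2 * y) (Ioi 0) y :=
    fun y _ => by simpa using ((hasDerivAt_pow 2 y).const_add c).hasDerivWithinAt
  have hinj : InjOn (fun y : ℝ => c + y ^ 2) (Ioi 0) := fun y hy z hz h =>
    (pow_left_inj₀ hy.le hz.le two_ne_zero).1 (add_left_cancel h)
  rw [← himage, lintegral_image_eq_lintegral_abs_deriv_mul measurableSet_Ioi hderiv hinj]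
  refine setLIntegral_congr_fun measurableSet_Ioi fun y hy => ?_
  rw [abs_of_pos (by simpa using hy)]

theorem lintegral_Ioi_add_lintegral_Ioi_comp_neg (F : ℝ → ℝ≥0∞) :
    (∫⁻ y in Ioi 0, F y) + ∫⁻ y in Ioi 0, F (-y) = ∫⁻ y, F y := by
  have hneg : ∫⁻ y in Ioi 0, F (-y) = ∫⁻ y in Iio 0, F y := by
    rw [← lintegral_indicator measurableSet_Ioi, ← lintegral_indicator measurableSet_Iio,
      ← lintegral_neg_eq_self]
    congr 1 with y
    simp [indicator]
  have hdisj : Disjoint (Iio (0 : ℝ)) (Ioi 0) :=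
    (Iio_disjoint_Ici le_rfl).mono_right Ioi_subset_Ici_self
  rw [hneg, add_comm, ← lintegral_union measurableSet_Ioi hdisj, Iio_union_Ioi,
    restrict_compl_singleton]

/-- The density of `c + Y ^ 2` when `Y` has density `f`. -/
noncomputable def addSqDensity (f : ℝ → ℝ≥0∞) (c r : ℝ) : ℝ≥0∞ :=
  if c < r then (f √(r - c) + f (-√(r - c))) * ENNReal.ofReal (2 * √(r - c))⁻¹ else 0

theorem measurable_addSqDensity {f : ℝ → ℝ≥0∞} (hf : Measurable f) :
    Measurable (uncurry (addSqDensity f)) :=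
  Measurable.ite (measurableSet_lt measurable_fst measurable_snd) (by fun_prop) measurable_const

theorem lintegral_mul_comp_add_sq {f g : ℝ → ℝ≥0∞} (hf : Measurable f) (hg : Measurable g)
    (c : ℝ) :
    ∫⁻ y, f y * g (c + y ^ 2) = ∫⁻ r, addSqDensity f c r * g r := by
  have hsupp : ∫⁻ r, addSqDensity f c r * g r =
      ∫⁻ r in Ioi c, (f √(r - c) + f (-√(r - c))) * ENNReal.ofReal (2 * √(r - c))⁻¹ * g r := by
    rw [← lintegral_indicator measurableSet_Ioi]
    congr 1 with r
    by_cases hr : c < r <;> simp [addSqDensity, hr]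
  have hsubst : ∀ y ∈ Ioi (0 : ℝ), ENNReal.ofReal (2 * y) *
      ((f √(c + y ^ 2 - c) + f (-√(c + y ^ 2 - c))) * ENNReal.ofReal (2 * √(c + y ^ 2 - c))⁻¹ *
        g (c + y ^ 2)) = f y * g (c + y ^ 2) + f (-y) * g (c + (-y) ^ 2) := by
    intro y hy
    have hy : 0 < y := hy
    have hcancel : ENNReal.ofReal (2 * y) * ENNReal.ofReal (2 * y)⁻¹ = 1 := by
      rw [← ENNReal.ofReal_mul (by positivity), mul_inv_cancel₀ (by positivity), ENNReal.ofReal_one]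
    rw [add_sub_cancel_left, sqrt_sq hy.le, neg_sq]
    calc _ = ENNReal.ofReal (2 * y) * ENNReal.ofReal (2 * y)⁻¹ *
          ((f y + f (-y)) * g (c + y ^ 2)) := by ring
      _ = _ := by rw [hcancel, one_mul, add_mul]
  rw [hsupp, lintegral_Ioi_eq_lintegral_Ioi_add_sq,
    setLIntegral_congr_fun measurableSet_Ioi hsubst, lintegral_add_left (by fun_prop),
    lintegral_Ioi_add_lintegral_Ioi_comp_neg]

theorem map_add_sq_withDensity {f : ℝ → ℝ≥0∞} (hf : Measurable f) (c : ℝ) :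
    (volume.withDensity f).map (fun y => c + y ^ 2) = volume.withDensity (addSqDensity f c) := by
  have hdens : Measurable (addSqDensity f c) := (measurable_addSqDensity hf).of_uncurry_left
  refine Measure.ext_of_lintegral _ fun g hg => ?_
  rw [lintegral_map hg (by fun_prop), lintegral_withDensity_eq_lintegral_mul _ hf (by fun_prop),
    lintegral_withDensity_eq_lintegral_mul _ hdens hg]
  exact lintegral_mul_comp_add_sq hf hg c

theorem map_prod_eq_withDensity_of_map_eq {α β γ : Type*} [MeasurableSpace α] [MeasurableSpace β]
    [MeasurableSpace γ] {μ : Measure α} {ν : Measure β} {ρ : Measure γ} [SFinite μ] [SFinite ν]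
    [SFinite ρ] {φ : α → β → γ} (hφ : Measurable (uncurry φ)) {g : α → γ → ℝ≥0∞}
    (hg : Measurable (uncurry g)) (hfiber : ∀ x, ν.map (φ x) = ρ.withDensity (g x)) :
    (μ.prod ν).map (fun p => (p.1, φ p.1 p.2)) = (μ.prod ρ).withDensity (uncurry g) := by
  refine Measure.ext_of_lintegral _ fun G hG => ?_
  rw [lintegral_map hG (by fun_prop), lintegral_prod _ (by fun_prop),
    lintegral_withDensity_eq_lintegral_mul _ hg hG, lintegral_prod _ (by fun_prop)]
  refine lintegral_congr fun x => ?_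
  have hGx : Measurable fun r => G (x, r) := hG.comp measurable_prodMk_left
  rw [← lintegral_map hGx hφ.of_uncurry_left, hfiber x,
    lintegral_withDensity_eq_lintegral_mul _ hg.of_uncurry_left hGx]
  rfl

theorem gaussianPDFReal_mul_gaussianPDFReal (m : ℝ) (v : ℝ≥0) (x y : ℝ) :
    gaussianPDFReal m v x * gaussianPDFReal m v y = (2 * π * v)⁻¹ *
      exp (-(x ^ 2 + y ^ 2 + 2 * m ^ 2) / (2 * v)) * exp (x * m / v) * exp (y * m / v) := by
  have hnorm : (√(2 * π * v))⁻¹ * (√(2 * π * v))⁻¹ = (2 * π * v)⁻¹ := by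
    rw [← mul_inv, mul_self_sqrt (by positivity)]
  simp only [gaussianPDFReal]
  calc _ = (√(2 * π * v))⁻¹ * (√(2 * π * v))⁻¹ *
        exp (-(x - m) ^ 2 / (2 * v) + -(y - m) ^ 2 / (2 * v)) := by rw [exp_add]; ring
    _ = _ := by rw [hnorm]; simp only [mul_assoc, ← exp_add]; congr 2; ring

theorem gaussianPDF_mul_addSqDensity (m : ℝ) (v : ℝ≥0) (x r : ℝ) :
    gaussianPDF m v x * addSqDensity (gaussianPDF m v) (x ^ 2) r = ENNReal.ofReal
      (if x ^ 2 < r then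
        (1 / (2 * π * v)) * exp (-(r + 2 * m ^ 2) / (2 * v)) *
          exp (x * m / v) * cosh (m * √(r - x ^ 2) / v) / √(r - x ^ 2)
      else 0) := by
  unfold addSqDensity
  split_ifs with hxr
  · set s := √(r - x ^ 2) with hs_def
    have hs : 0 < s := sqrt_pos.2 (sub_pos.2 hxr)
    have hs2 : x ^ 2 + s ^ 2 = r := by rw [hs_def, sq_sqrt (sub_nonneg.2 hxr.le)]; ring
    have hpdf := gaussianPDFReal_nonneg m v
    simp only [gaussianPDF]
    rw [← ENNReal.ofReal_add (hpdf _) (hpdf _), ← ENNReal.ofReal_mul (add_nonneg (hpdf _) (hpdf _)),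
      ← ENNReal.ofReal_mul (hpdf _)]
    congr 1
    rw [add_mul, mul_add, ← mul_assoc, ← mul_assoc, gaussianPDFReal_mul_gaussianPDFReal,
      gaussianPDFReal_mul_gaussianPDFReal, neg_sq, hs2, cosh_eq]
    field_simp
  · simp

theorem joint_density_rice
    (m σ : ℝ) (hσ : 0 < σ)
    (μ : Measure ℝ) (hμ : μ = gaussianReal m ⟨σ ^ 2, sq_nonneg σ⟩)
    (h : ℝ → ℝ → ℝ)
    (hh : ∀ x r : ℝ, h x r =
      if x ^ 2 < r then
        (1 / (2 * π * σ ^ 2)) * Real.exp (-(r + 2 * m ^ 2) / (2 * σ ^ 2)) *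
          Real.exp (x * m / σ ^ 2) * Real.cosh (m * Real.sqrt (r - x ^ 2) / σ ^ 2) /
            Real.sqrt (r - x ^ 2)
      else 0) :
    Measure.map (fun p : ℝ × ℝ => (p.1, p.1 ^ 2 + p.2 ^ 2)) (μ.prod μ) =
      (volume : Measure (ℝ × ℝ)).withDensity (fun q => ENNReal.ofReal (h q.1 q.2)) := by
  obtain ⟨v, hv_def⟩ : ∃ v : ℝ≥0, v = ⟨σ ^ 2, sq_nonneg σ⟩ := ⟨_, rfl⟩
  have hv_coe : (v : ℝ) = σ ^ 2 := by rw [hv_def]; rfl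
  have hv : v ≠ 0 := by rw [← NNReal.coe_ne_zero, hv_coe]; positivity
  rw [← hv_def, gaussianReal_of_var_ne_zero m hv] at hμ
  subst hμ
  have hpdf : Measurable (gaussianPDF m v) := measurable_gaussianPDF m v
  have hdens : Measurable (uncurry fun x => addSqDensity (gaussianPDF m v) (x ^ 2)) :=
    (measurable_addSqDensity hpdf).comp (by fun_prop : Measurable fun q : ℝ × ℝ => (q.1 ^ 2, q.2))
  rw [map_prod_eq_withDensity_of_map_eq (φ := fun x y => x ^ 2 + y ^ 2) (by fun_prop) hdens
    (fun x => map_add_sq_withDensity hpdf (x ^ 2)), prod_withDensity_left hpdf,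
    ← withDensity_mul _ (by fun_prop) hdens, ← Measure.volume_eq_prod]
  congr with q
  simp only [Pi.mul_apply, uncurry, hh, ← hv_coe]
  exact gaussianPDF_mul_addSqDensity m v q.1 q.2
end
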